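/- Let 0 < ρ < 1 and consider the n×n matrix A with ρ on the diagonal and superdiagonal and zeros elsewhere, and H = [e_1, ρ·e_n] ∈ ℝ^{n×2}. Then the distance to uncontrollability satisfies d(A,H) ≥ ρ·sin(π/(n+1)) ≥ ρ/(n+1). -/

import Mathlib

open Matrix Real

/-- Least singular value of a matrix `B` with `n` rows:
`σ_min(B) = inf { ‖Bᴴ v‖ : ‖v‖ = 1 }`. -/
noncomputable def sigmaMin {n : ℕ} {m : Type*} [Fintype m] (B : Matrix (Fin n) m ℂ) : ℝ :=
  sInf {x : ℝ | ∃ v : EuclideanSpace ℂ (Fin n), ‖v‖ = 1 ∧ x = ‖Matrix.toEuclideanLin Bᴴ v‖}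

/-- Eising's distance to uncontrollability:
`d(A,H) = inf_{s ∈ ℂ} σ_min [A - sI, H]`. -/
noncomputable def distUnc {n r : ℕ} (A : Matrix (Fin n) (Fin n) ℂ)
    (H : Matrix (Fin n) (Fin r) ℂ) : ℝ :=
  ⨅ s : ℂ, sigmaMin (Matrix.fromCols (A - s • (1 : Matrix (Fin n) (Fin n) ℂ)) H)

/-- The matrix `ρ·J_n(1)`: `ρ` on the diagonal and superdiagonal, zeros elsewhere. -/
def rhoJordan (n : ℕ) (ρ : ℝ) : Matrix (Fin n) (Fin n) ℂ :=
  Matrix.of fun i j =>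
    if (i : ℕ) = (j : ℕ) ∨ (j : ℕ) = (i : ℕ) + 1 then (ρ : ℂ) else 0

/-!
Pad a vector `v` to `u = (0, v₀, …, v_{n-1}, 0)` and put `t = |ρ - s|`, `θ = π / (n + 1)`. The
vector `w = [A - sI, H]ᴴ v` has the entries `ρ u_j + conj (ρ - s) u_{j+1}` for `j = 0, …, n` (the
last one comes from the second column of `H`), so
`‖w‖² ≥ ∑ (ρ |u_j| - t |u_{j+1}|)² ≥ (ρ² + t² - 2ρt cos θ) ‖v‖² ≥ ρ² sin² θ ‖v‖²`.
The middle step is the discrete Wirtinger inequality `∑ x_j x_{j+1} ≤ cos θ ∑ x_j²` for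
`x_0 = x_{n+1} = 0`, obtained by weighted AM-GM with weights from the positive solution
`sin (jθ)` of `s_{j-1} + s_{j+1} = 2 cos θ · s_j`. The second claim is Jordan's inequality.
-/

open Finset

lemma two_mul_mul_le_div_mul_sq_add {p q : ℝ} (hp : 0 < p) (hq : 0 < q) (a b : ℝ) :
    2 * (a * b) ≤ q / p * a ^ 2 + p / q * b ^ 2 := by
  have hdiff : q / p * a ^ 2 + p / q * b ^ 2 - 2 * (a * b) = (q * a - p * b) ^ 2 / (p * q) := by
    field_simp; ring
  have hnonneg : 0 ≤ (q * a - p * b) ^ 2 / (p * q) := by positivity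
  linarith

lemma sum_range_shift_of_boundary_eq_zero {M : Type*} [AddCommMonoid M] {n : ℕ} (f : ℕ → M)
    (h0 : f 0 = 0) (hn : f (n + 1) = 0) :
    ∑ j ∈ range (n + 1), f (j + 1) = ∑ j ∈ range (n + 1), f j := by
  rw [← add_zero (∑ j ∈ range (n + 1), f (j + 1)), ← h0, ← sum_range_succ', sum_range_succ, hn,
    add_zero]

theorem sum_mul_succ_le_of_pos_solution {n : ℕ} {c : ℝ} {s x : ℕ → ℝ}
    (hs0 : 0 ≤ s 0) (hs_pos : ∀ j ∈ Icc 1 n, 0 < s j) (hs_end : 0 ≤ s (n + 1))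
    (hrec : ∀ j < n, s j + s (j + 2) = 2 * c * s (j + 1))
    (hx0 : x 0 = 0) (hx_end : x (n + 1) = 0) :
    ∑ j ∈ range (n + 1), x j * x (j + 1) ≤ c * ∑ j ∈ range (n + 1), x j ^ 2 := by
  have hs_nonneg : ∀ j ≤ n + 1, 0 ≤ s j := by
    intro j hj
    rcases Nat.eq_zero_or_pos j with rfl | hj0
    · exact hs0
    rcases hj.lt_or_eq with hj | rfl
    · exact (hs_pos j (mem_Icc.2 ⟨hj0, by omega⟩)).le
    · exact hs_end
  -- At `j = 0` the truncated `j - 1` and the junk division by `s 0` are harmless: `x 0 = 0`.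
  set f : ℕ → ℝ := fun j => s (j - 1) / s j * x j ^ 2
  have amgm : ∀ j ∈ range (n + 1),
      2 * (x j * x (j + 1)) ≤ s (j + 1) / s j * x j ^ 2 + f (j + 1) := by
    intro j hj
    rw [mem_range] at hj
    simp only [f, Nat.add_sub_cancel]
    by_cases hx : x j * x (j + 1) = 0
    · rw [hx, mul_zero]
      have hsj := hs_nonneg j (by omega)
      have hsj1 := hs_nonneg (j + 1) (by omega)
      positivity
    have hj0 : j ≠ 0 := by rintro rfl; simp [hx0] at hx
    have hjn : j ≠ n := by rintro rfl; simp [hx_end] at hx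
    exact two_mul_mul_le_div_mul_sq_add (hs_pos j (mem_Icc.2 ⟨by omega, by omega⟩))
      (hs_pos (j + 1) (mem_Icc.2 ⟨by omega, by omega⟩)) _ _
  have combine : ∀ j ∈ range (n + 1), s (j + 1) / s j * x j ^ 2 + f j = 2 * c * x j ^ 2 := by
    intro j hj
    rw [mem_range] at hj
    cases j with
    | zero => simp [f, hx0]
    | succ k =>
      have hk : s (k + 1) ≠ 0 := (hs_pos (k + 1) (mem_Icc.2 ⟨by omega, by omega⟩)).ne'
      simp only [f, Nat.add_sub_cancel]
      rw [← add_mul, ← add_div, add_comm, hrec k (by omega), mul_div_cancel_right₀ _ hk]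
  have hf : ∑ j ∈ range (n + 1), f (j + 1) = ∑ j ∈ range (n + 1), f j :=
    sum_range_shift_of_boundary_eq_zero f (by simp [f, hx0]) (by simp [f, hx_end])
  have hsum := sum_le_sum amgm
  rw [sum_add_distrib, hf, ← sum_add_distrib, sum_congr rfl combine, ← mul_sum, ← mul_sum] at hsum
  linarith

theorem sum_mul_succ_le_cos_mul_sum_sq {n : ℕ} {x : ℕ → ℝ} (hx0 : x 0 = 0)
    (hx_end : x (n + 1) = 0) :
    ∑ j ∈ range (n + 1), x j * x (j + 1) ≤ cos (π / (n + 1)) * ∑ j ∈ range (n + 1), x j ^ 2 := by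
  set θ := π / (n + 1)
  have hθ : ((n : ℝ) + 1) * θ = π := by simp only [θ]; field_simp
  refine sum_mul_succ_le_of_pos_solution (s := fun j => sin (j * θ)) (by simp) ?_ ?_ ?_ hx0 hx_end
  · intro j hj
    have hj : (1 : ℝ) ≤ j ∧ (j : ℝ) ≤ n := by
      rw [mem_Icc] at hj; exact ⟨by exact_mod_cast hj.1, by exact_mod_cast hj.2⟩
    apply sin_pos_of_pos_of_lt_pi <;> nlinarith [pi_pos]
  · simp [hθ]
  · intro j _
    have h2 : ((j + 2 : ℕ) : ℝ) * θ = (j + 1 : ℕ) * θ + θ := by push_cast; ring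
    have h0 : (j : ℝ) * θ = (j + 1 : ℕ) * θ - θ := by push_cast; ring
    simp only [h2, h0, sin_add, sin_sub]
    ring

theorem sq_mul_sin_sq_mul_sum_sq_le {n : ℕ} {x : ℕ → ℝ} (hx0 : x 0 = 0)
    (hx_end : x (n + 1) = 0) {ρ t : ℝ} (hρ : 0 ≤ ρ) (ht : 0 ≤ t) :
    (ρ * sin (π / (n + 1))) ^ 2 * ∑ j ∈ range (n + 1), x j ^ 2 ≤
      ∑ j ∈ range (n + 1), (ρ * x j - t * x (j + 1)) ^ 2 := by
  have hexpand : ∑ j ∈ range (n + 1), (ρ * x j - t * x (j + 1)) ^ 2 =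
      ρ ^ 2 * ∑ j ∈ range (n + 1), x j ^ 2 + t ^ 2 * ∑ j ∈ range (n + 1), x (j + 1) ^ 2
        - 2 * ρ * t * ∑ j ∈ range (n + 1), x j * x (j + 1) := by
    rw [mul_sum, mul_sum, mul_sum, ← sum_add_distrib, ← sum_sub_distrib]
    exact sum_congr rfl fun j _ => by ring
  have hshift : ∑ j ∈ range (n + 1), x (j + 1) ^ 2 = ∑ j ∈ range (n + 1), x j ^ 2 :=
    sum_range_shift_of_boundary_eq_zero (fun j => x j ^ 2) (by simp [hx0]) (by simp [hx_end])
  have hcross := mul_le_mul_of_nonneg_left (sum_mul_succ_le_cos_mul_sum_sq hx0 hx_end)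
    (mul_nonneg (mul_nonneg zero_le_two hρ) ht)
  have hS : 0 ≤ ∑ j ∈ range (n + 1), x j ^ 2 := sum_nonneg fun j _ => sq_nonneg _
  rw [hexpand, hshift, mul_pow, sin_sq]
  nlinarith [mul_nonneg (sq_nonneg (t - ρ * cos (π / (n + 1)))) hS]

theorem two_div_le_sin_pi_div {x : ℝ} (hx : 2 ≤ x) : 2 / x ≤ sin (π / x) := by
  have hx0 : 0 < x := by linarith
  have h := mul_le_sin (div_nonneg pi_pos.le hx0.le)
    (div_le_div_of_nonneg_left pi_pos.le two_pos hx)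
  rwa [div_mul_div_cancel₀ pi_ne_zero] at h

def shiftPad {α : Type*} [Zero α] {n : ℕ} (v : Fin n → α) : ℕ → α
  | 0 => 0
  | j + 1 => if h : j < n then v ⟨j, h⟩ else 0

section shiftPad
variable {α : Type*} {n : ℕ}

@[simp] lemma shiftPad_zero [Zero α] (v : Fin n → α) : shiftPad v 0 = 0 := rfl

@[simp] lemma shiftPad_succ_val [Zero α] (v : Fin n → α) (k : Fin n) :
    shiftPad v (k + 1) = v k := by
  simp [shiftPad]

@[simp] lemma shiftPad_succ_self [Zero α] (v : Fin n → α) : shiftPad v (n + 1) = 0 := by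
  simp [shiftPad]

lemma sum_ite_succ_eq_shiftPad [AddCommMonoid α] (v : Fin n → α) (j : ℕ) :
    ∑ k : Fin n, (if (k : ℕ) + 1 = j then v k else 0) = shiftPad v j := by
  cases j with
  | zero => simp
  | succ j =>
    by_cases hj : j < n
    · rw [shiftPad, dif_pos hj]
      simpa [Fin.ext_iff] using Finset.sum_ite_eq' univ (⟨j, hj⟩ : Fin n) v
    · rw [shiftPad, dif_neg hj]
      exact sum_eq_zero fun k _ => if_neg (by omega)

lemma sum_range_norm_sq_shiftPad {E : Type*} [SeminormedAddCommGroup E] (v : Fin n → E) :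
    ∑ j ∈ range (n + 1), ‖shiftPad v j‖ ^ 2 = ∑ k, ‖v k‖ ^ 2 := by
  rw [sum_range_succ', ← Fin.sum_univ_eq_sum_range (fun j => ‖shiftPad v (j + 1)‖ ^ 2)]
  simp

end shiftPad

theorem conjTranspose_rhoJordan_mulVec (n : ℕ) (ρ : ℝ) (v : Fin n → ℂ) :
    (rhoJordan n ρ)ᴴ *ᵥ v = fun j : Fin n => ρ * shiftPad v j + ρ * v j := by
  ext j
  have hsplit : ∀ k : Fin n, star (rhoJordan n ρ k j) * v k =
      ρ * (if (k : ℕ) + 1 = j then v k else 0) + ρ * (if k = j then v k else 0) := by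
    intro k
    simp only [rhoJordan, of_apply, Fin.ext_iff]
    split_ifs <;> first | omega | simp
  simp only [mulVec, dotProduct, conjTranspose_apply, hsplit, sum_add_distrib, ← mul_sum,
    sum_ite_succ_eq_shiftPad, sum_ite_eq', mem_univ, if_true]

theorem conjTranspose_rhoJordan_sub_smul_mulVec (n : ℕ) (ρ : ℝ) (s : ℂ) (v : Fin n → ℂ) :
    (rhoJordan n ρ - s • 1)ᴴ *ᵥ v =
      fun j : Fin n => ρ * shiftPad v j + star ((ρ : ℂ) - s) * v j := by
  ext j
  simp only [conjTranspose_sub, conjTranspose_smul, RCLike.star_def, conjTranspose_one,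
    sub_mulVec, conjTranspose_rhoJordan_mulVec, smul_mulVec, one_mulVec, Pi.sub_apply,
    Pi.smul_apply, smul_eq_mul, star_sub, Complex.conj_ofReal, sub_mul]
  ring

/-- The input matrix `H = [e₁, ρ eₙ]`. -/
def boundaryInput (n : ℕ) (ρ : ℝ) : Matrix (Fin n) (Fin 2) ℂ :=
  of fun i (j : Fin 2) =>
    if j = 0 then (if (i : ℕ) = 0 then (1 : ℂ) else 0)
    else (if (i : ℕ) = n - 1 then (ρ : ℂ) else 0)

theorem conjTranspose_boundaryInput_mulVec_one (n : ℕ) (ρ : ℝ) (v : Fin n → ℂ) :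
    ((boundaryInput n ρ)ᴴ *ᵥ v) 1 = ρ * shiftPad v n := by
  cases n with
  | zero => simp
  | succ m =>
    have : ∀ k : Fin (m + 1), star (boundaryInput (m + 1) ρ k 1) * v k =
        ρ * (if k = Fin.last m then v k else 0) := by
      intro k
      simp only [boundaryInput, of_apply, Fin.ext_iff, Fin.val_last]
      split_ifs <;> simp_all
    simp only [mulVec, dotProduct, conjTranspose_apply, this, ← mul_sum]
    simp [shiftPad, Fin.last]

theorem norm_sq_toEuclideanLin_conjTranspose_fromCols {𝕜 m m₁ m₂ : Type*} [RCLike 𝕜]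
    [Fintype m] [DecidableEq m] [Fintype m₁] [Fintype m₂] (M : Matrix m m₁ 𝕜) (N : Matrix m m₂ 𝕜)
    (v : EuclideanSpace 𝕜 m) :
    ‖toEuclideanLin (fromCols M N)ᴴ v‖ ^ 2 =
      ∑ i, ‖(Mᴴ *ᵥ v) i‖ ^ 2 + ∑ i, ‖(Nᴴ *ᵥ v) i‖ ^ 2 := by
  simp [EuclideanSpace.norm_sq_eq, conjTranspose_fromCols_eq_fromRows_conjTranspose,
    toLpLin_apply, Fintype.sum_sum_type]

theorem sq_mul_sin_sq_mul_sum_norm_sq_le {n : ℕ} {u : ℕ → ℂ} (hu0 : u 0 = 0)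
    (hu_end : u (n + 1) = 0) {ρ : ℝ} (hρ : 0 ≤ ρ) (a : ℂ) :
    (ρ * sin (π / (n + 1))) ^ 2 * ∑ j ∈ range (n + 1), ‖u j‖ ^ 2 ≤
      ∑ j ∈ range (n + 1), ‖ρ * u j + a * u (j + 1)‖ ^ 2 := by
  refine (sq_mul_sin_sq_mul_sum_sq_le (x := fun j => ‖u j‖) (by simp [hu0]) (by simp [hu_end]) hρ
    (norm_nonneg a)).trans (sum_le_sum fun j _ => sq_le_sq.2 ?_)
  have h := abs_norm_sub_norm_le ((ρ : ℂ) * u j) (-(a * u (j + 1)))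
  rw [sub_neg_eq_add, norm_neg, norm_mul, norm_mul, Complex.norm_real, norm_of_nonneg hρ] at h
  rwa [abs_norm]

theorem mul_sin_mul_norm_le_norm_conjTranspose_fromCols {n : ℕ} {ρ : ℝ} (hρ : 0 ≤ ρ) (s : ℂ)
    (v : EuclideanSpace ℂ (Fin n)) :
    ρ * sin (π / (n + 1)) * ‖v‖ ≤
      ‖toEuclideanLin (fromCols (rhoJordan n ρ - s • 1) (boundaryInput n ρ))ᴴ v‖ := by
  set u := shiftPad v.ofLp
  have hbidiag : ∑ j ∈ range (n + 1), ‖ρ * u j + star ((ρ : ℂ) - s) * u (j + 1)‖ ^ 2 ≤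
      ‖toEuclideanLin (fromCols (rhoJordan n ρ - s • 1) (boundaryInput n ρ))ᴴ v‖ ^ 2 := by
    rw [norm_sq_toEuclideanLin_conjTranspose_fromCols, conjTranspose_rhoJordan_sub_smul_mulVec,
      sum_range_succ, Fin.sum_univ_two, conjTranspose_boundaryInput_mulVec_one,
      ← Fin.sum_univ_eq_sum_range (fun j => ‖ρ * u j + star ((ρ : ℂ) - s) * u (j + 1)‖ ^ 2)]
    simp only [u, shiftPad_succ_val, shiftPad_succ_self, mul_zero, add_zero]
    linarith [sq_nonneg ‖((boundaryInput n ρ)ᴴ *ᵥ v.ofLp) 0‖]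
  have hv : ‖v‖ ^ 2 = ∑ j ∈ range (n + 1), ‖u j‖ ^ 2 := by
    rw [EuclideanSpace.norm_sq_eq, sum_range_norm_sq_shiftPad]
  have h := (sq_mul_sin_sq_mul_sum_norm_sq_le (shiftPad_zero _) (shiftPad_succ_self _) hρ _).trans
    hbidiag
  rw [← hv, ← mul_pow] at h
  exact le_of_pow_le_pow_left₀ two_ne_zero (norm_nonneg _) h

theorem le_sigmaMin {n : ℕ} {m : Type*} [Fintype m] (hn : 0 < n) {B : Matrix (Fin n) m ℂ} {c : ℝ}
    (h : ∀ v : EuclideanSpace ℂ (Fin n), ‖v‖ = 1 → c ≤ ‖toEuclideanLin Bᴴ v‖) :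
    c ≤ sigmaMin B := by
  refine le_csInf ⟨_, EuclideanSpace.single ⟨0, hn⟩ 1, by simp, rfl⟩ ?_
  rintro _ ⟨v, hv, rfl⟩
  exact h v hv

theorem difficult_system_distance_lower_bound_general {n : ℕ} (hn : 1 ≤ n) (ρ : ℝ)
    (hρ0 : 0 < ρ) :
    ρ * Real.sin (π / (n + 1)) ≤ distUnc (rhoJordan n ρ)
        (Matrix.of fun i (j : Fin 2) =>
          if j = 0 then (if (i : ℕ) = 0 then (1 : ℂ) else 0)
          else (if (i : ℕ) = n - 1 then (ρ : ℂ) else 0)) ∧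
    ρ / (n + 1) ≤ ρ * Real.sin (π / (n + 1)) := by
  refine ⟨le_ciInf fun s => le_sigmaMin hn fun v hv => ?_, ?_⟩
  · have h := mul_sin_mul_norm_le_norm_conjTranspose_fromCols hρ0.le s v
    rwa [hv, mul_one] at h
  · have hsin := two_div_le_sin_pi_div (x := n + 1) (by norm_cast; omega)
    calc ρ / (n + 1) ≤ ρ * (2 / (n + 1)) := by
          rw [mul_div_assoc']; gcongr; linarith
      _ ≤ ρ * sin (π / (n + 1)) := mul_le_mul_of_nonneg_left hsin hρ0.le

theorem difficult_system_distance_lower_bound {n : ℕ} (hn : 1 ≤ n) (ρ : ℝ)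
    (hρ0 : 0 < ρ) (hρ1 : ρ < 1) :
    ρ * Real.sin (π / (n + 1)) ≤ distUnc (rhoJordan n ρ)
        (Matrix.of fun i (j : Fin 2) =>
          if j = 0 then (if (i : ℕ) = 0 then (1 : ℂ) else 0)
          else (if (i : ℕ) = n - 1 then (ρ : ℂ) else 0)) ∧
    ρ / (n + 1) ≤ ρ * Real.sin (π / (n + 1)) :=
  difficult_system_distance_lower_bound_general hn ρ hρ0
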